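/- Let j, j' be 2×2 integer matrices with determinant ±1, written j = [[r, p],[s, q]] and j' = [[r', p'],[s', q']]. Then there exist integers m₀, m₁ and signs δ₀, δ₁ ∈ {−1, 1} such that [[1,0],[m₁,δ₁]] · j = j' · [[1,0],[m₀,δ₀]] if and only if |p'| = |p| and r' ≡ r (mod |p|). -/

import Mathlib

/-!
The first row of `[[1,0],[m₁,δ₁]] · j` is the first row of `j`, while that of
`j' · [[1,0],[m₀,δ₀]]` is `(r' + p' m₀, p' δ₀)`; so the equation forces `p = ± p'` and
`r ≡ r' (mod p')`. Conversely, for such `m₀, δ₀` the only candidate left factor is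
`j' · [[1,0],[m₀,δ₀]] · j⁻¹`, an integer matrix because `j` is unimodular. It has first row
`(1, 0)` because `j' · [[1,0],[m₀,δ₀]]` and `j` share their first row, and its determinant,
hence its corner entry `δ₁`, is a unit.
-/

open Matrix

theorem Int.exists_isUnit_mul_eq_iff_abs_eq {a b : ℤ} :
    (∃ δ, IsUnit δ ∧ a * δ = b) ↔ |a| = |b| := by
  rw [abs_eq_abs]
  constructor
  · rintro ⟨δ, hδ, rfl⟩
    rcases Int.isUnit_iff.1 hδ with rfl | rfl <;> simp
  · rintro (rfl | rfl)
    · exact ⟨1, isUnit_one, mul_one a⟩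
    · exact ⟨-1, isUnit_one.neg, by ring⟩

theorem Matrix.exists_lowerTriangular_mul_eq_iff {R : Type*} [CommRing R]
    {j X : Matrix (Fin 2) (Fin 2) R} (hj : IsUnit j.det) :
    (∃ m δ : R, IsUnit δ ∧ !![1, 0; m, δ] * j = X) ↔ X 0 = j 0 ∧ IsUnit X.det := by
  constructor
  · rintro ⟨m, δ, hδ, rfl⟩
    refine ⟨?_, ?_⟩
    · ext k; fin_cases k <;> simp [mul_apply, Fin.sum_univ_two]
    · rw [det_mul, det_fin_two_of]; simpa using hδ.mul hj
  · rintro ⟨h0, hX⟩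
    set C := X * j⁻¹
    have hC : C * j = X := nonsing_inv_mul_cancel_right j X hj
    have hC0 : C 0 = ![1, 0] := by
      apply vecMul_injective_of_isUnit ((isUnit_iff_isUnit_det j).2 hj)
      ext k; fin_cases k <;> simp [vecMul, dotProduct, Fin.sum_univ_two, ← mul_apply, hC, h0]
    have hdet : C.det * j.det = X.det := by rw [← det_mul, hC]
    refine ⟨C 1 0, C 1 1, ?_, ?_⟩
    · have : C.det = C 1 1 := by simp [det_fin_two, hC0]
      exact this ▸ isUnit_of_mul_isUnit_left (hdet ▸ hX)
    · rw [← hC]; congr; ext i k; fin_cases i <;> fin_cases k <;> simp [hC0]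

/-- For unimodular integer matrices `j = [[r,p],[s,q]]` and `j' = [[r',p'],[s',q']]`,
there exist integers `m₀, m₁` and signs `δ₀, δ₁ ∈ {−1,1}` with
`[[1,0],[m₁,δ₁]]·j = j'·[[1,0],[m₀,δ₀]]` iff `|p'| = |p|` and `r' ≡ r (mod |p|)`. -/
theorem stmt_1 (r p s q r' p' s' q' : ℤ)
    (hj : (!![r, p; s, q] : Matrix (Fin 2) (Fin 2) ℤ).det = 1 ∨
          (!![r, p; s, q] : Matrix (Fin 2) (Fin 2) ℤ).det = -1)
    (hj' : (!![r', p'; s', q'] : Matrix (Fin 2) (Fin 2) ℤ).det = 1 ∨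
           (!![r', p'; s', q'] : Matrix (Fin 2) (Fin 2) ℤ).det = -1) :
    (∃ m₀ m₁ δ₀ δ₁ : ℤ, (δ₀ = 1 ∨ δ₀ = -1) ∧ (δ₁ = 1 ∨ δ₁ = -1) ∧
      !![(1 : ℤ), 0; m₁, δ₁] * !![r, p; s, q] = !![r', p'; s', q'] * !![(1 : ℤ), 0; m₀, δ₀]) ↔
    (|p'| = |p| ∧ r' ≡ r [ZMOD |p|]) := by
  rw [← Int.isUnit_iff] at hj hj'
  have row_zero (m₀ δ₀ : ℤ) :
      (!![r', p'; s', q'] * !![(1 : ℤ), 0; m₀, δ₀]) 0 = !![r, p; s, q] 0 ↔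
        r = r' + p' * m₀ ∧ p' * δ₀ = p := by
    simp [funext_iff, Fin.forall_fin_two, eq_comm]
  simp only [← Int.isUnit_iff]
  calc _ ↔ ∃ m₀ δ₀, IsUnit δ₀ ∧ ∃ m₁ δ₁, IsUnit δ₁ ∧
        !![(1 : ℤ), 0; m₁, δ₁] * !![r, p; s, q] = !![r', p'; s', q'] * !![(1 : ℤ), 0; m₀, δ₀] := by
        grind
    _ ↔ ∃ m₀ δ₀, IsUnit δ₀ ∧ r = r' + p' * m₀ ∧ p' * δ₀ = p := by
        refine exists₂_congr fun m₀ δ₀ => and_congr_right fun hδ₀ => ?_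
        rw [exists_lowerTriangular_mul_eq_iff hj, row_zero, det_mul, IsUnit.mul_iff,
          det_fin_two_of (1 : ℤ) 0 m₀ δ₀]
        simp only [hj', hδ₀, one_mul, zero_mul, sub_zero, and_self, and_true]
    _ ↔ (∃ δ₀, IsUnit δ₀ ∧ p' * δ₀ = p) ∧ ∃ m₀, r = r' + p' * m₀ := by grind
    _ ↔ _ := by
        rw [Int.exists_isUnit_mul_eq_iff_abs_eq]
        exact and_congr_right fun h => by rw [← h, Int.modEq_abs, Int.modEq_iff_add_fac]
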